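/- Let n ≥ 2, let G : ℝⁿ → (n×n real symmetric matrices) be smooth with smooth inverse K, let V : ℝⁿ → ℝ be smooth and nowhere zero, and let ξ : ℝⁿ → ℝⁿ, τ, h : ℝⁿ → ℝ be smooth. Suppose (i) £_ξ G = τ·G, (ii) £_ξ V = (τ − 2h)·V, and (iii) for all q, μ, ν, κ: £_ξ Γ^κ_{μν} − (1/2)[(∂h/∂q^μ) δ^κ_ν + (∂h/∂q^ν) δ^κ_μ] − P^κ G_{μν} = 0, where P^κ = (£_ξW)^κ/(2V) + h·W^κ/V and W^α = Σ_μ K^{αμ} ∂V/∂q^μ. Then there exists a constant c with h(q) = τ(q) + c for all q ∈ ℝⁿ. -/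

import Mathlib

open scoped BigOperators

/-- Partial derivative `∂f/∂q^α` of a scalar function on `ℝⁿ`. -/
noncomputable def pd {n : ℕ} (f : (Fin n → ℝ) → ℝ) (α : Fin n) (q : Fin n → ℝ) : ℝ :=
  fderiv ℝ f q (Pi.single α 1)

/-- Lie derivative `(£_ξ G)_{μν}`. -/
noncomputable def lieG {n : ℕ} (ξ : (Fin n → ℝ) → Fin n → ℝ)
    (G : (Fin n → ℝ) → Fin n → Fin n → ℝ) (q : Fin n → ℝ) (μ ν : Fin n) : ℝ :=
  ∑ α : Fin n, (ξ q α * pd (fun p => G p μ ν) α q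
      + pd (fun p => ξ p α) μ q * G q α ν
      + pd (fun p => ξ p α) ν q * G q μ α)

/-- Lie derivative `£_ξ V`. -/
noncomputable def lieV {n : ℕ} (ξ : (Fin n → ℝ) → Fin n → ℝ)
    (V : (Fin n → ℝ) → ℝ) (q : Fin n → ℝ) : ℝ :=
  ∑ α : Fin n, ξ q α * pd V α q

/-- Lie derivative of a vector field `W` along `ξ`. -/
noncomputable def lieW {n : ℕ} (ξ W : (Fin n → ℝ) → Fin n → ℝ)
    (q : Fin n → ℝ) (α : Fin n) : ℝ :=
  ∑ ρ : Fin n, (ξ q ρ * pd (fun p => W p α) ρ q - W q ρ * pd (fun p => ξ p α) ρ q)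

/-- The gradient vector field `W^α = Σ_μ K^{αμ} ∂V/∂q^μ`. -/
noncomputable def gradV {n : ℕ} (K : (Fin n → ℝ) → Fin n → Fin n → ℝ)
    (V : (Fin n → ℝ) → ℝ) (q : Fin n → ℝ) (α : Fin n) : ℝ :=
  ∑ μ : Fin n, K q α μ * pd V μ q

/-- Christoffel symbols of `G`, with `K = G⁻¹`. -/
noncomputable def christoffel {n : ℕ} (G K : (Fin n → ℝ) → Fin n → Fin n → ℝ)
    (q : Fin n → ℝ) (κ μ ν : Fin n) : ℝ :=
  (1 / 2) * ∑ ρ : Fin n, K q κ ρ *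
    (pd (fun p => G p ρ ν) μ q + pd (fun p => G p ρ μ) ν q - pd (fun p => G p μ ν) ρ q)

/-- Lie derivative of the Christoffel symbols along `ξ`. -/
noncomputable def lieGamma {n : ℕ} (ξ : (Fin n → ℝ) → Fin n → ℝ)
    (Γ : (Fin n → ℝ) → Fin n → Fin n → Fin n → ℝ) (q : Fin n → ℝ) (κ μ ν : Fin n) : ℝ :=
  (∑ ρ : Fin n, ξ q ρ * pd (fun p => Γ p κ μ ν) ρ q)
  - (∑ ρ : Fin n, pd (fun p => ξ p κ) ρ q * Γ q ρ μ ν)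
  + (∑ ρ : Fin n, pd (fun p => ξ p ρ) μ q * Γ q κ ρ ν)
  + (∑ ρ : Fin n, pd (fun p => ξ p ρ) ν q * Γ q κ μ ρ)
  + pd (fun p => pd (fun r => ξ r κ) ν p) μ q

/-!
Contract the symmetry condition over `κ = ν`. With `K = G⁻¹`, the contracted Christoffel symbol
`Γ^ν_{μν}` is `½ tr(K ∂_μ G) = ½ ∂_μ log |det G|`, and the trace of `£_ξ G = τ G` against `K` reads
`ξ^ρ tr(K ∂_ρ G) + 2 div ξ = n τ`; differentiating it gives `Σ_ν £_ξ Γ^ν_{μν} = (n/2) ∂_μ τ`.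
On the other side, `£_ξ G = τ G` forces `£_ξ K = -τ K`, which together with `£_ξ V = (τ - 2h) V`
gives `£_ξ W = -2h W + V K d(τ - 2h)`; hence `P = ½ K d(τ - 2h)` and `P^ν G_{μν} = ½ ∂_μ(τ - 2h)`.
The contracted condition becomes `(n - 1)/2 · ∂_μ(τ - h) = 0`, so for `n ≥ 2` the function `h - τ`
has zero gradient on `ℝⁿ` and is constant.
-/

open Finset Matrix
open scoped ContDiff

section PartialDerivative

variable {n : ℕ} {f g : (Fin n → ℝ) → ℝ} {q : Fin n → ℝ}

lemma pd_add (hf : DifferentiableAt ℝ f q) (hg : DifferentiableAt ℝ g q) (α : Fin n) :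
    pd (fun p => f p + g p) α q = pd f α q + pd g α q := by
  simp [pd, fderiv_fun_add hf hg]

lemma pd_sub (hf : DifferentiableAt ℝ f q) (hg : DifferentiableAt ℝ g q) (α : Fin n) :
    pd (fun p => f p - g p) α q = pd f α q - pd g α q := by
  simp [pd, fderiv_fun_sub hf hg]

lemma pd_mul (hf : DifferentiableAt ℝ f q) (hg : DifferentiableAt ℝ g q) (α : Fin n) :
    pd (fun p => f p * g p) α q = pd f α q * g q + f q * pd g α q := by
  simp [pd, fderiv_fun_mul hf hg]
  ring

lemma pd_const_mul (hf : DifferentiableAt ℝ f q) (c : ℝ) (α : Fin n) :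
    pd (fun p => c * f p) α q = c * pd f α q := by
  simp [pd, fderiv_const_mul hf]

lemma pd_sum {ι : Type*} (s : Finset ι) {F : ι → (Fin n → ℝ) → ℝ}
    (hF : ∀ i ∈ s, DifferentiableAt ℝ (F i) q) (α : Fin n) :
    pd (fun p => ∑ i ∈ s, F i p) α q = ∑ i ∈ s, pd (F i) α q := by
  simp [pd, fderiv_fun_sum hF]

lemma ContDiff.pd {m : WithTop ℕ∞} (hf : ContDiff ℝ (m + 1) f) (α : Fin n) :
    ContDiff ℝ m (fun q => pd f α q) :=
  (hf.fderiv_right le_rfl).clm_apply contDiff_const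

lemma pd_pd_comm (hf : ContDiff ℝ 2 f) (α β : Fin n) (q : Fin n → ℝ) :
    pd (fun p => pd f β p) α q = pd (fun p => pd f α p) β q := by
  have hf' : DifferentiableAt ℝ (fderiv ℝ f) q :=
    (hf.fderiv_right (m := 1) le_rfl).differentiable one_ne_zero q
  have hsymm := (hf.contDiffAt (x := q)).isSymmSndFDerivAt (by simp)
  simp only [pd, fderiv_clm_apply hf' (differentiableAt_const _)]
  simpa using hsymm (Pi.single α 1) (Pi.single β 1)

lemma exists_const_of_pd_eq_zero (hf : Differentiable ℝ f) (h : ∀ q α, pd f α q = 0) :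
    ∃ c, ∀ q, f q = c := by
  refine ⟨f 0, fun q => is_const_of_fderiv_eq_zero hf (fun p => ?_) q 0⟩
  refine ContinuousLinearMap.coe_injective (LinearMap.pi_ext fun α x => ?_)
  have hx : (Pi.single α x : Fin n → ℝ) = x • Pi.single α 1 := by simp [← Pi.single_smul']
  simp [hx, show fderiv ℝ f p (Pi.single α 1) = 0 from h p α]

end PartialDerivative

section MatrixDerivative

variable {n : ℕ} {l m k : Type*} {q : Fin n → ℝ}

noncomputable def pdM (M : (Fin n → ℝ) → Matrix l m ℝ) (α : Fin n) (q : Fin n → ℝ) :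
    Matrix l m ℝ :=
  of fun i j => pd (fun p => M p i j) α q

@[simp] lemma pdM_apply (M : (Fin n → ℝ) → Matrix l m ℝ) (α : Fin n) (q : Fin n → ℝ) (i : l)
    (j : m) : pdM M α q i j = pd (fun p => M p i j) α q := rfl

lemma pdM_mul [Fintype m] {M : (Fin n → ℝ) → Matrix l m ℝ} {N : (Fin n → ℝ) → Matrix m k ℝ}
    (hM : ∀ i j, DifferentiableAt ℝ (fun p => M p i j) q)
    (hN : ∀ i j, DifferentiableAt ℝ (fun p => N p i j) q) (α : Fin n) :
    pdM (fun p => M p * N p) α q = pdM M α q * N q + M q * pdM N α q := by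
  ext i j
  simp only [pdM_apply, mul_apply, Matrix.add_apply]
  rw [pd_sum (F := fun r p => M p i r * N p r j) _ fun r _ => (hM i r).mul (hN r j),
    ← sum_add_distrib]
  exact sum_congr rfl fun r _ => pd_mul (hM i r) (hN r j) α

lemma pd_trace [Fintype m] {M : (Fin n → ℝ) → Matrix m m ℝ}
    (hM : ∀ i j, DifferentiableAt ℝ (fun p => M p i j) q) (α : Fin n) :
    pd (fun p => trace (M p)) α q = trace (pdM M α q) := by
  simp only [trace, Matrix.diag]
  exact pd_sum _ (fun i _ => hM i i) α

lemma pdM_pdM_comm {M : (Fin n → ℝ) → Matrix l m ℝ} (hM : ∀ i j, ContDiff ℝ 2 fun p => M p i j)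
    (α β : Fin n) (q : Fin n → ℝ) :
    pdM (fun p => pdM M β p) α q = pdM (fun p => pdM M α p) β q := by
  ext i j
  exact pd_pd_comm (hM i j) α β q

variable [Fintype m] [DecidableEq m]

lemma mul_eq_one_of_sum_mul_eq_ite {A B : Matrix m m ℝ}
    (h : ∀ i j, ∑ k, A i k * B k j = if i = j then 1 else 0) : A * B = 1 :=
  ext fun i j => by simpa [mul_apply, one_apply] using h i j

lemma sum_mulVec_mul_of_mul_eq_one {A B : Matrix m m ℝ} (h : B * A = 1) (v : m → ℝ) (i : m) :
    ∑ j, (B *ᵥ v) j * A i j = v i := by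
  calc ∑ j, (B *ᵥ v) j * A i j = (A *ᵥ B *ᵥ v) i := by simp [mulVec, dotProduct, mul_comm]
    _ = v i := by rw [mulVec_mulVec, mul_eq_one_comm.mp h, one_mulVec]

lemma pdM_of_mul_eq_one {G K : (Fin n → ℝ) → Matrix m m ℝ}
    (hG : ∀ i j, DifferentiableAt ℝ (fun p => G p i j) q)
    (hK : ∀ i j, DifferentiableAt ℝ (fun p => K p i j) q) (hKG : ∀ p, K p * G p = 1)
    (α : Fin n) : pdM K α q = -(K q * pdM G α q * K q) := by
  have hzero : pdM K α q * G q + K q * pdM G α q = 0 := by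
    rw [← pdM_mul hK hG]
    ext i j
    simp [hKG, one_apply, pd]
  have hGK : G q * K q = 1 := mul_eq_one_comm.mp (hKG q)
  calc pdM K α q = (pdM K α q * G q + K q * pdM G α q) * K q - K q * pdM G α q * K q := by
        rw [add_mul, Matrix.mul_assoc, hGK, Matrix.mul_one, add_sub_cancel_right]
    _ = -(K q * pdM G α q * K q) := by rw [hzero, Matrix.zero_mul, zero_sub]

end MatrixDerivative

section DirectionalDerivative

variable {n : ℕ} {l m : Type*} {ξ : (Fin n → ℝ) → Fin n → ℝ} {q : Fin n → ℝ}

-- `lieV ξ f` is the derivative of an arbitrary scalar function `f` along `ξ`.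
lemma lieV_mul {f g : (Fin n → ℝ) → ℝ} (hf : DifferentiableAt ℝ f q)
    (hg : DifferentiableAt ℝ g q) :
    lieV ξ (fun p => f p * g p) q = lieV ξ f q * g q + f q * lieV ξ g q := by
  simp only [lieV, pd_mul hf hg, mul_add, sum_add_distrib, sum_mul, mul_sum]
  congr 1 <;> exact sum_congr rfl fun _ _ => by ring

lemma lieV_sum {ι : Type*} (s : Finset ι) {F : ι → (Fin n → ℝ) → ℝ}
    (hF : ∀ i ∈ s, DifferentiableAt ℝ (F i) q) :
    lieV ξ (fun p => ∑ i ∈ s, F i p) q = ∑ i ∈ s, lieV ξ (F i) q := by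
  simp only [lieV, pd_sum s hF, mul_sum]
  exact sum_comm

noncomputable def grad (f : (Fin n → ℝ) → ℝ) (q : Fin n → ℝ) : Fin n → ℝ :=
  fun α => pd f α q

-- `jac ξ q μ α = ∂_μ ξ^α`, the transpose of the usual Jacobian matrix.
noncomputable def jac (ξ : (Fin n → ℝ) → Fin n → ℝ) (q : Fin n → ℝ) : Matrix (Fin n) (Fin n) ℝ :=
  of fun μ α => pd (fun p => ξ p α) μ q

noncomputable def dirDeriv (ξ : (Fin n → ℝ) → Fin n → ℝ) (M : (Fin n → ℝ) → Matrix l m ℝ)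
    (q : Fin n → ℝ) : Matrix l m ℝ :=
  of fun i j => lieV ξ (fun p => M p i j) q

noncomputable def dirDerivVec (ξ W : (Fin n → ℝ) → Fin n → ℝ) (q : Fin n → ℝ) : Fin n → ℝ :=
  fun α => lieV ξ (fun p => W p α) q

lemma dirDeriv_eq_sum (ξ : (Fin n → ℝ) → Fin n → ℝ) (M : (Fin n → ℝ) → Matrix l m ℝ)
    (q : Fin n → ℝ) : dirDeriv ξ M q = ∑ ρ, ξ q ρ • pdM M ρ q := by
  ext i j
  simp [dirDeriv, lieV, Matrix.sum_apply]

lemma dirDeriv_of_mul_eq_one [Fintype m] [DecidableEq m] {G K : (Fin n → ℝ) → Matrix m m ℝ}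
    (hG : ∀ i j, DifferentiableAt ℝ (fun p => G p i j) q)
    (hK : ∀ i j, DifferentiableAt ℝ (fun p => K p i j) q) (hKG : ∀ p, K p * G p = 1) :
    dirDeriv ξ K q = -(K q * dirDeriv ξ G q * K q) := by
  simp only [dirDeriv_eq_sum, pdM_of_mul_eq_one hG hK hKG, Matrix.mul_sum, Matrix.sum_mul,
    Matrix.mul_smul, Matrix.smul_mul, smul_neg, sum_neg_distrib]

lemma dirDerivVec_mulVec {K : (Fin n → ℝ) → Matrix (Fin n) (Fin n) ℝ} {v : (Fin n → ℝ) → Fin n → ℝ}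
    (hK : ∀ i j, DifferentiableAt ℝ (fun p => K p i j) q)
    (hv : ∀ i, DifferentiableAt ℝ (fun p => v p i) q) :
    dirDerivVec ξ (fun p => K p *ᵥ v p) q = dirDeriv ξ K q *ᵥ v q + K q *ᵥ dirDerivVec ξ v q := by
  ext α
  simp only [dirDerivVec, dirDeriv, mulVec, dotProduct, Pi.add_apply, of_apply, ← sum_add_distrib]
  rw [lieV_sum (F := fun j p => K p α j * v p j) _ fun j _ => (hK α j).mul (hv j)]
  exact sum_congr rfl fun j _ => lieV_mul (hK α j) (hv j)

lemma dirDerivVec_grad {V : (Fin n → ℝ) → ℝ} (hV : ContDiff ℝ 2 V)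
    (hξ : ∀ ρ, DifferentiableAt ℝ (fun p => ξ p ρ) q) :
    dirDerivVec ξ (grad V) q = grad (lieV ξ V) q - jac ξ q *ᵥ grad V q := by
  have hdV : ∀ ρ, DifferentiableAt ℝ (fun p => pd V ρ p) q :=
    fun ρ => ((hV.pd (m := 1) ρ).differentiable one_ne_zero) q
  ext σ
  simp only [dirDerivVec, grad, lieV, jac, mulVec, dotProduct, Pi.sub_apply, of_apply]
  rw [show lieV ξ V = fun p => ∑ ρ, ξ p ρ * pd V ρ p from rfl,
    pd_sum (F := fun ρ p => ξ p ρ * pd V ρ p) _ fun ρ _ => (hξ ρ).mul (hdV ρ),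
    eq_sub_iff_add_eq, ← sum_add_distrib]
  refine sum_congr rfl fun ρ _ => ?_
  rw [pd_mul (hξ ρ) (hdV ρ), pd_pd_comm hV]
  ring

lemma grad_mul {f g : (Fin n → ℝ) → ℝ} (hf : DifferentiableAt ℝ f q)
    (hg : DifferentiableAt ℝ g q) :
    grad (fun p => f p * g p) q = g q • grad f q + f q • grad g q := by
  ext α
  simp only [grad, pd_mul hf hg, Pi.add_apply, Pi.smul_apply, smul_eq_mul]
  ring

end DirectionalDerivative

section LieDerivative

variable {n : ℕ} {G K : (Fin n → ℝ) → Matrix (Fin n) (Fin n) ℝ} {ξ : (Fin n → ℝ) → Fin n → ℝ}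
  {τ f h V : (Fin n → ℝ) → ℝ} {q : Fin n → ℝ}

lemma of_lieG_eq : of (lieG ξ G q) = dirDeriv ξ G q + jac ξ q * G q + G q * (jac ξ q)ᵀ := by
  ext μ ν
  simp only [lieG, dirDeriv, lieV, jac, mul_apply, sum_add_distrib, Matrix.add_apply, of_apply,
    transpose_apply]
  simp only [mul_comm]

-- `£_ξ K = -τ K`, in components.
lemma dirDeriv_eq_of_lieG_eq (hG : ∀ μ ν, DifferentiableAt ℝ (fun p => G p μ ν) q)
    (hK : ∀ μ ν, DifferentiableAt ℝ (fun p => K p μ ν) q) (hKG : ∀ p, K p * G p = 1)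
    (hlieG : ∀ μ ν, lieG ξ G q μ ν = τ q * G q μ ν) :
    dirDeriv ξ K q = -τ q • K q + K q * jac ξ q + (jac ξ q)ᵀ * K q := by
  have hGK : G q * K q = 1 := mul_eq_one_comm.mp (hKG q)
  have hdG : dirDeriv ξ G q = τ q • G q - jac ξ q * G q - G q * (jac ξ q)ᵀ := by
    have hsplit := of_lieG_eq (ξ := ξ) (G := G) (q := q)
    rw [show of (lieG ξ G q) = τ q • G q from ext fun μ ν => by simp [hlieG]] at hsplit
    rw [hsplit]
    abel
  rw [dirDeriv_of_mul_eq_one hG hK hKG, hdG]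
  simp only [Matrix.mul_sub, Matrix.sub_mul, Matrix.mul_smul, Matrix.smul_mul, Matrix.mul_assoc,
    hGK, Matrix.mul_one]
  simp only [← Matrix.mul_assoc, hKG q, Matrix.one_mul]
  module

lemma lieW_eq_dirDerivVec_sub (W : (Fin n → ℝ) → Fin n → ℝ) :
    lieW ξ W q = dirDerivVec ξ W q - (jac ξ q)ᵀ *ᵥ W q := by
  ext α
  simp [lieW, dirDerivVec, lieV, jac, mulVec, dotProduct, mul_comm]

lemma gradV_eq_mulVec (K : (Fin n → ℝ) → Matrix (Fin n) (Fin n) ℝ) (V : (Fin n → ℝ) → ℝ) :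
    gradV K V = fun p => K p *ᵥ grad V p := rfl

lemma lieW_gradV (hG : ∀ μ ν, ContDiff ℝ ∞ fun p => G p μ ν)
    (hK : ∀ μ ν, ContDiff ℝ ∞ fun p => K p μ ν) (hKG : ∀ p, K p * G p = 1)
    (hξ : ContDiff ℝ ∞ ξ) (hV : ContDiff ℝ ∞ V) (hf : ContDiff ℝ ∞ f)
    (hlieG : ∀ μ ν, lieG ξ G q μ ν = τ q * G q μ ν) (hlieV : ∀ p, lieV ξ V p = f p * V p) :
    lieW ξ (gradV K V) q = (f q - τ q) • gradV K V q + V q • (K q *ᵥ grad f q) := by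
  have hKd : ∀ μ ν, DifferentiableAt ℝ (fun p => K p μ ν) q :=
    fun μ ν => (hK μ ν).differentiable (by simp) q
  have hξd : ∀ ρ, DifferentiableAt ℝ (fun p => ξ p ρ) q :=
    fun ρ => (contDiff_pi.1 hξ ρ).differentiable (by simp) q
  have hdV : ∀ ρ, DifferentiableAt ℝ (fun p => grad V p ρ) q :=
    fun ρ => (hV.pd (m := ∞) ρ).differentiable (by simp) q
  rw [lieW_eq_dirDerivVec_sub, gradV_eq_mulVec, dirDerivVec_mulVec hKd hdV,
    dirDeriv_eq_of_lieG_eq (fun μ ν => (hG μ ν).differentiable (by simp) q) hKd hKG hlieG,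
    dirDerivVec_grad (hV.of_le (by decide)) hξd,
    show lieV ξ V = fun p => f p * V p from funext hlieV,
    grad_mul (hf.differentiable (by simp) q) (hV.differentiable (by simp) q)]
  simp only [add_mulVec, smul_mulVec, mulVec_add, mulVec_sub, mulVec_smul,
    mulVec_mulVec, sub_smul]
  module

lemma sum_lieW_gradV_mul (hG : ∀ μ ν, ContDiff ℝ ∞ fun p => G p μ ν)
    (hK : ∀ μ ν, ContDiff ℝ ∞ fun p => K p μ ν) (hKG : ∀ p, K p * G p = 1)
    (hξ : ContDiff ℝ ∞ ξ) (hV : ContDiff ℝ ∞ V) (hτ : ContDiff ℝ ∞ τ) (hh : ContDiff ℝ ∞ h)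
    (hlieG : ∀ μ ν, lieG ξ G q μ ν = τ q * G q μ ν)
    (hlieV : ∀ p, lieV ξ V p = (τ p - 2 * h p) * V p) (hV0 : V q ≠ 0) (μ : Fin n) :
    ∑ ν, (lieW ξ (gradV K V) q ν / (2 * V q) + h q * gradV K V q ν / V q) * G q μ ν
      = 1 / 2 * (pd τ μ q - 2 * pd h μ q) := by
  have hτd := hτ.differentiable (by simp) q
  have hhd := hh.differentiable (by simp) q
  have hP : ∀ κ, lieW ξ (gradV K V) q κ / (2 * V q) + h q * gradV K V q κ / V q
      = 1 / 2 * (K q *ᵥ grad (fun p => τ p - 2 * h p) q) κ := by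
    intro κ
    rw [lieW_gradV hG hK hKG hξ hV (hτ.sub (contDiff_const.mul hh)) hlieG hlieV]
    simp only [Pi.add_apply, Pi.smul_apply, smul_eq_mul]
    field_simp
    ring
  simp only [hP, mul_assoc, ← mul_sum, sum_mulVec_mul_of_mul_eq_one (hKG q), grad]
  rw [pd_sub hτd (hhd.const_mul 2), pd_const_mul hhd]

end LieDerivative

section Christoffel

variable {n : ℕ} {G K : (Fin n → ℝ) → Matrix (Fin n) (Fin n) ℝ} {ξ : (Fin n → ℝ) → Fin n → ℝ}
  {τ : (Fin n → ℝ) → ℝ}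

-- When `K = G⁻¹` this is `∂_μ log |det G|` (Jacobi's formula), which is why it is closed.
noncomputable def logDetGrad (G K : (Fin n → ℝ) → Matrix (Fin n) (Fin n) ℝ) (q : Fin n → ℝ) :
    Fin n → ℝ :=
  fun μ => trace (K q * pdM G μ q)

lemma contDiff_mul_pdM_apply (hG : ∀ μ ν, ContDiff ℝ ∞ fun p => G p μ ν)
    (hK : ∀ μ ν, ContDiff ℝ ∞ fun p => K p μ ν) (α : Fin n) (i j : Fin n) :
    ContDiff ℝ ∞ fun p => (K p * pdM G α p) i j := by
  simp only [mul_apply, pdM_apply]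
  exact ContDiff.sum fun r _ => (hK i r).mul ((hG r j).pd α)

lemma contDiff_logDetGrad (hG : ∀ μ ν, ContDiff ℝ ∞ fun p => G p μ ν)
    (hK : ∀ μ ν, ContDiff ℝ ∞ fun p => K p μ ν) (μ : Fin n) :
    ContDiff ℝ ∞ fun p => logDetGrad G K p μ := by
  unfold logDetGrad trace
  exact ContDiff.sum fun i _ => contDiff_mul_pdM_apply hG hK μ i i

lemma contDiff_christoffel (hG : ∀ μ ν, ContDiff ℝ ∞ fun p => G p μ ν)
    (hK : ∀ μ ν, ContDiff ℝ ∞ fun p => K p μ ν) (κ μ ν : Fin n) :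
    ContDiff ℝ ∞ fun p => christoffel G K p κ μ ν :=
  contDiff_const.mul <| ContDiff.sum fun ρ _ =>
    (hK κ ρ).mul ((((hG ρ ν).pd μ).add ((hG ρ μ).pd ν)).sub ((hG μ ν).pd ρ))

lemma sum_christoffel_self (hGsymm : ∀ q μ ν, G q μ ν = G q ν μ)
    (hKsymm : ∀ q μ ν, K q μ ν = K q ν μ) (q : Fin n → ℝ) (μ : Fin n) :
    ∑ ν, christoffel G K q ν μ ν = 1 / 2 * logDetGrad G K q μ := by
  have hcancel : ∑ ν, ∑ ρ, K q ν ρ * pd (fun p => G p ρ μ) ν q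
      = ∑ ν, ∑ ρ, K q ν ρ * pd (fun p => G p μ ν) ρ q := by
    rw [sum_comm]
    refine sum_congr rfl fun ν _ => sum_congr rfl fun ρ _ => ?_
    rw [hKsymm q ρ ν, show (fun p => G p ν μ) = fun p => G p μ ν from funext fun p => hGsymm p ν μ]
  simp only [christoffel, logDetGrad, trace, Matrix.diag, mul_apply, pdM_apply, ← mul_sum,
    mul_add, mul_sub, sum_add_distrib, sum_sub_distrib, hcancel]
  ring

lemma pd_logDetGrad_comm (hG : ∀ μ ν, ContDiff ℝ ∞ fun p => G p μ ν)
    (hK : ∀ μ ν, ContDiff ℝ ∞ fun p => K p μ ν) (hKG : ∀ p, K p * G p = 1)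
    (q : Fin n → ℝ) (α β : Fin n) :
    pd (fun p => logDetGrad G K p β) α q = pd (fun p => logDetGrad G K p α) β q := by
  have hGd : ∀ μ ν, DifferentiableAt ℝ (fun p => G p μ ν) q :=
    fun μ ν => (hG μ ν).differentiable (by simp) q
  have hKd : ∀ μ ν, DifferentiableAt ℝ (fun p => K p μ ν) q :=
    fun μ ν => (hK μ ν).differentiable (by simp) q
  have hexpand : ∀ a b, pd (fun p => logDetGrad G K p b) a q
      = -trace (K q * pdM G a q * (K q * pdM G b q))
        + trace (K q * pdM (fun p => pdM G b p) a q) := by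
    intro a b
    have hdG : ∀ μ ν, DifferentiableAt ℝ (fun p => pdM G b p μ ν) q :=
      fun μ ν => ((hG μ ν).pd (m := ∞) b).differentiable (by simp) q
    show pd (fun p => trace (K p * pdM G b p)) a q = _
    rw [pd_trace (fun i j => (contDiff_mul_pdM_apply hG hK b i j).differentiable (by simp) q),
      pdM_mul hKd hdG, pdM_of_mul_eq_one hGd hKd hKG, trace_add, Matrix.neg_mul, trace_neg,
      Matrix.mul_assoc]
  rw [hexpand, hexpand, pdM_pdM_comm (fun μ ν => (hG μ ν).of_le (by decide)),
    trace_mul_comm (K q * pdM G α q)]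

lemma dotProduct_logDetGrad_add_two_trace_jac (hKG : ∀ p, K p * G p = 1) {q : Fin n → ℝ}
    (hlieG : ∀ μ ν, lieG ξ G q μ ν = τ q * G q μ ν) :
    ξ q ⬝ᵥ logDetGrad G K q + 2 * trace (jac ξ q) = n * τ q := by
  have hGK : G q * K q = 1 := mul_eq_one_comm.mp (hKG q)
  have htrace : trace (K q * of (lieG ξ G q)) = n * τ q := by
    rw [show of (lieG ξ G q) = τ q • G q from ext fun μ ν => by simp [hlieG], Matrix.mul_smul,
      hKG, trace_smul, trace_one, Fintype.card_fin, smul_eq_mul, mul_comm]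
  rw [← htrace, of_lieG_eq, dirDeriv_eq_sum, Matrix.mul_add, Matrix.mul_add, trace_add, trace_add,
    trace_mul_comm (K q) (jac ξ q * G q), Matrix.mul_assoc, hGK, ← Matrix.mul_assoc, hKG,
    Matrix.mul_one, Matrix.one_mul, trace_transpose, Matrix.mul_sum, trace_sum]
  simp only [Matrix.mul_smul, trace_smul, smul_eq_mul, dotProduct, logDetGrad]
  ring

lemma pd_dotProduct_logDetGrad_add_two_trace_jac (hG : ∀ μ ν, ContDiff ℝ ∞ fun p => G p μ ν)
    (hK : ∀ μ ν, ContDiff ℝ ∞ fun p => K p μ ν) (hKG : ∀ p, K p * G p = 1) (hξ : ContDiff ℝ ∞ ξ)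
    (hτ : ContDiff ℝ ∞ τ) (hlieG : ∀ q μ ν, lieG ξ G q μ ν = τ q * G q μ ν)
    (q : Fin n → ℝ) (μ : Fin n) :
    ∑ ρ, (pd (fun p => ξ p ρ) μ q * logDetGrad G K q ρ
        + ξ q ρ * pd (fun p => logDetGrad G K p ρ) μ q)
      + 2 * pd (fun p => ∑ ν, pd (fun r => ξ r ν) ν p) μ q = n * pd τ μ q := by
  have hξd : ∀ ρ, DifferentiableAt ℝ (fun p => ξ p ρ) q :=
    fun ρ => (contDiff_pi.1 hξ ρ).differentiable (by simp) q
  have hL : ∀ ρ, DifferentiableAt ℝ (fun p => logDetGrad G K p ρ) q :=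
    fun ρ => (contDiff_logDetGrad hG hK ρ).differentiable (by simp) q
  have hdot : DifferentiableAt ℝ (fun p => ∑ ρ, ξ p ρ * logDetGrad G K p ρ) q :=
    DifferentiableAt.fun_sum fun ρ _ => (hξd ρ).mul (hL ρ)
  have hdiv : DifferentiableAt ℝ (fun p => ∑ ν, pd (fun r => ξ r ν) ν p) q :=
    DifferentiableAt.fun_sum fun ν _ =>
      ((contDiff_pi.1 hξ ν).pd (m := ∞) ν).differentiable (by simp) q
  calc _ = pd (fun p => ξ p ⬝ᵥ logDetGrad G K p + 2 * trace (jac ξ p)) μ q := by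
        simp only [dotProduct, trace, Matrix.diag, jac, of_apply]
        rw [pd_add hdot (hdiv.const_mul 2), pd_const_mul hdiv,
          pd_sum (F := fun ρ p => ξ p ρ * logDetGrad G K p ρ) _ fun ρ _ => (hξd ρ).mul (hL ρ)]
        exact congrArg (· + _) (sum_congr rfl fun ρ _ => (pd_mul (hξd ρ) (hL ρ) μ).symm)
    _ = pd (fun p => n * τ p) μ q := by
        simp only [dotProduct_logDetGrad_add_two_trace_jac hKG (hlieG _)]
    _ = n * pd τ μ q := pd_const_mul (hτ.differentiable (by simp) q) _ μ

lemma sum_lieGamma_christoffel_self (hG : ∀ μ ν, ContDiff ℝ ∞ fun p => G p μ ν)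
    (hK : ∀ μ ν, ContDiff ℝ ∞ fun p => K p μ ν) (hGsymm : ∀ q μ ν, G q μ ν = G q ν μ)
    (hKsymm : ∀ q μ ν, K q μ ν = K q ν μ) (hKG : ∀ p, K p * G p = 1) (hξ : ContDiff ℝ ∞ ξ)
    (hτ : ContDiff ℝ ∞ τ) (hlieG : ∀ q μ ν, lieG ξ G q μ ν = τ q * G q μ ν)
    (q : Fin n → ℝ) (μ : Fin n) :
    ∑ ν, lieGamma ξ (christoffel G K) q ν μ ν = n / 2 * pd τ μ q := by
  have hL : DifferentiableAt ℝ (fun p => logDetGrad G K p μ) q :=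
    (contDiff_logDetGrad hG hK μ).differentiable (by simp) q
  -- `hTi` contracts the `i`-th sum in `lieGamma`; the second and fourth cancel.
  have hT1 : ∑ ν, ∑ ρ, ξ q ρ * pd (fun p => christoffel G K p ν μ ν) ρ q
      = 1 / 2 * ∑ ρ, ξ q ρ * pd (fun p => logDetGrad G K p ρ) μ q := by
    rw [sum_comm, mul_sum]
    refine sum_congr rfl fun ρ _ => ?_
    rw [← mul_sum,
      ← pd_sum _ fun ν _ => (contDiff_christoffel hG hK ν μ ν).differentiable (by simp) q,
      funext fun p => sum_christoffel_self hGsymm hKsymm p μ, pd_const_mul hL,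
      pd_logDetGrad_comm hG hK hKG]
    ring
  have hT24 : ∑ ν, ∑ ρ, pd (fun p => ξ p ρ) ν q * christoffel G K q ν μ ρ
      = ∑ ν, ∑ ρ, pd (fun p => ξ p ν) ρ q * christoffel G K q ρ μ ν := sum_comm
  have hT3 : ∑ ν, ∑ ρ, pd (fun p => ξ p ρ) μ q * christoffel G K q ν ρ ν
      = 1 / 2 * ∑ ρ, pd (fun p => ξ p ρ) μ q * logDetGrad G K q ρ := by
    rw [sum_comm, mul_sum]
    refine sum_congr rfl fun ρ _ => ?_
    rw [← mul_sum, sum_christoffel_self hGsymm hKsymm]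
    ring
  have hT5 : ∑ ν, pd (fun p => pd (fun r => ξ r ν) ν p) μ q
      = pd (fun p => ∑ ν, pd (fun r => ξ r ν) ν p) μ q :=
    (pd_sum _ (fun ν _ => ((contDiff_pi.1 hξ ν).pd (m := ∞) ν).differentiable (by simp) q)
      μ).symm
  have hderiv := pd_dotProduct_logDetGrad_add_two_trace_jac hG hK hKG hξ hτ hlieG q μ
  simp only [lieGamma, sum_add_distrib, sum_sub_distrib]
  rw [hT1, hT24, hT3, hT5]
  rw [sum_add_distrib] at hderiv
  linarith

end Christoffel

/-- from `£_ξ G = τ·G`, `£_ξ V = (τ−2h)·V` and the symmetry condition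
`£_ξ Γ^κ_{μν} − (1/2)(h_{,μ}δ^κ_ν + h_{,ν}δ^κ_μ) − P^κ G_{μν} = 0` with
`P^κ = (£_ξ W)^κ/(2V) + h W^κ/V`, it follows that `h = τ + c` for a constant `c`. -/
theorem h_equals_tau_plus_constant (n : ℕ) (hn : 2 ≤ n)
    (G K : (Fin n → ℝ) → Fin n → Fin n → ℝ)
    (hGsmooth : ∀ μ ν, ContDiff ℝ (⊤ : ℕ∞) fun q => G q μ ν)
    (hKsmooth : ∀ μ ν, ContDiff ℝ (⊤ : ℕ∞) fun q => K q μ ν)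
    (hGsymm : ∀ q μ ν, G q μ ν = G q ν μ)
    (hKsymm : ∀ q μ ν, K q μ ν = K q ν μ)
    (hinv : ∀ q μ ν, (∑ ρ : Fin n, K q μ ρ * G q ρ ν) = if μ = ν then (1 : ℝ) else 0)
    (V τ h : (Fin n → ℝ) → ℝ) (ξ : (Fin n → ℝ) → Fin n → ℝ)
    (hVsmooth : ContDiff ℝ (⊤ : ℕ∞) V)
    (hVne : ∀ q, V q ≠ 0)
    (hτsmooth : ContDiff ℝ (⊤ : ℕ∞) τ)
    (hhsmooth : ContDiff ℝ (⊤ : ℕ∞) h)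
    (hξsmooth : ContDiff ℝ (⊤ : ℕ∞) ξ)
    (hlieG : ∀ q μ ν, lieG ξ G q μ ν = τ q * G q μ ν)
    (hlieV : ∀ q, lieV ξ V q = (τ q - 2 * h q) * V q)
    (hsym : ∀ q : Fin n → ℝ, ∀ μ ν κ : Fin n,
      lieGamma ξ (christoffel G K) q κ μ ν
        - (1 / 2) * (pd h μ q * (if κ = ν then (1 : ℝ) else 0)
            + pd h ν q * (if κ = μ then (1 : ℝ) else 0))
        - (lieW ξ (gradV K V) q κ / (2 * V q) + h q * gradV K V q κ / V q) * G q μ ν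
        = 0) :
    ∃ c : ℝ, ∀ q : Fin n → ℝ, h q = τ q + c := by
  have hKG := fun q => mul_eq_one_of_sum_mul_eq_ite (hinv q)
  have hgrad : ∀ q μ, pd h μ q = pd τ μ q := by
    intro q μ
    have hδ : ∑ ν, 1 / 2 * (pd h μ q * (if ν = ν then (1 : ℝ) else 0)
        + pd h ν q * (if ν = μ then (1 : ℝ) else 0)) = (n + 1) / 2 * pd h μ q := by
      simp [sum_add_distrib, ← mul_sum]
      ring
    have hcontr := sum_eq_zero fun ν (_ : ν ∈ univ) => hsym q μ ν ν
    rw [sum_sub_distrib, sum_sub_distrib, hδ,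
      sum_lieGamma_christoffel_self hGsmooth hKsmooth hGsymm hKsymm hKG hξsmooth hτsmooth hlieG,
      sum_lieW_gradV_mul hGsmooth hKsmooth hKG hξsmooth hVsmooth hτsmooth hhsmooth (hlieG q)
        hlieV (hVne q)] at hcontr
    have hn1 : (n : ℝ) - 1 ≠ 0 := by
      have : (2 : ℝ) ≤ n := by exact_mod_cast hn
      linarith
    exact mul_left_cancel₀ hn1 (by linarith)
  have hhd := hhsmooth.differentiable (by simp)
  have hτd := hτsmooth.differentiable (by simp)
  obtain ⟨c, hc⟩ := exists_const_of_pd_eq_zero (f := fun p => h p - τ p) (hhd.sub hτd)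
    fun q μ => by rw [pd_sub (hhd q) (hτd q), hgrad, sub_self]
  exact ⟨c, fun q => by linarith [hc q]⟩
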